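/- arXiv:0902.3597 — 4 statements merged into one kernel-verified Lean document; each statement's English description precedes it below -/
import Mathlib

section
/- Let λ ≥ 1 and 0 ≤ m ≤ 2^{λ-1}. Let 𝓑 be a collection of dyadic intervals such that every I ∈ 𝓑 satisfies inf I = inf pred_λ(I) (where pred_λ(I) is the unique dyadic interval J ⊇ I with |J| = 2^λ |I|), and such that any two intervals J, K ∈ 𝓑 with |J| ≠ |K| satisfy |J| ≤ |K|/4 or |K| ≤ |J|/4. Define τ_m(I) = I + m·|I|. Then for every I ∈ 𝓑, the Lebesgue measure of I ∩ ⋃_{d=1}^{λ-1} ⋃_{J ∈ 𝓑, |J| = 2^{-d}|I|} (J ∪ τ_m(J)) is at most (2/3)|I|. -/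
open MeasureTheory

/-- The dyadic interval `[2^(-j) k, 2^(-j)(k+1))`. -/
noncomputable def dyI (j k : ℤ) : Set ℝ :=
  Set.Ico ((2:ℝ) ^ (-j) * k) ((2:ℝ) ^ (-j) * (k + 1))

lemma vol_dyI (j k : ℤ) : volume (dyI j k) = ENNReal.ofReal ((2:ℝ) ^ (-j)) := by
  rw [dyI, Real.volume_Ico]
  congr 1
  ring

lemma two_scale {j k n : ℤ} {d : ℕ} {x : ℝ}
    (hx : x ∈ dyI j k) (hx' : x ∈ dyI (j + d) n) :
    2 ^ d * k ≤ n ∧ n < 2 ^ d * (k + 1) := by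
  obtain ⟨h1, h2⟩ := hx
  obtain ⟨h3, h4⟩ := hx'
  have hb : (0:ℝ) < (2:ℝ) ^ (-(j + (d:ℤ))) := zpow_pos (by norm_num) _
  have key : (2:ℝ) ^ (-j) = (2:ℝ) ^ (-(j + (d:ℤ))) * 2 ^ d := by
    rw [← zpow_natCast (2:ℝ) d, ← zpow_add₀ (by norm_num : (2:ℝ) ≠ 0)]
    congr 1
    ring
  rw [key] at h1 h2
  constructor
  · have hr : (2:ℝ) ^ (-(j + (d:ℤ))) * (2 ^ d * k) < (2:ℝ) ^ (-(j + (d:ℤ))) * (n + 1) := by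
      calc (2:ℝ) ^ (-(j + (d:ℤ))) * (2 ^ d * k) = (2:ℝ) ^ (-(j + (d:ℤ))) * 2 ^ d * k := by ring
        _ ≤ x := h1
        _ < _ := h4
    have := (mul_lt_mul_iff_right₀ hb).mp hr
    have : ((2:ℤ) ^ d * k : ℤ) < (n + 1 : ℤ) := by exact_mod_cast this
    omega
  · have hr : (2:ℝ) ^ (-(j + (d:ℤ))) * (n:ℝ) < (2:ℝ) ^ (-(j + (d:ℤ))) * (2 ^ d * (k + 1)) := by
      calc (2:ℝ) ^ (-(j + (d:ℤ))) * (n:ℝ) ≤ x := h3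
        _ < (2:ℝ) ^ (-(j + (d:ℤ))) * 2 ^ d * (k + 1) := h2
        _ = _ := by ring
    have := (mul_lt_mul_iff_right₀ hb).mp hr
    exact_mod_cast this

lemma int_key {lam : ℕ} (hlam : 1 ≤ lam) {d : ℕ} (hd2 : d ≤ lam - 1)
    {m' s t : ℤ} (hm0 : 0 ≤ m') (hm : m' ≤ 2 ^ (lam - 1))
    (h1 : 2 ^ d * (2 ^ lam * s) ≤ 2 ^ lam * t + m')
    (h2 : 2 ^ lam * t + m' < 2 ^ d * (2 ^ lam * s + 1)) :
    t = 2 ^ d * s := by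
  set P : ℤ := 2 ^ (lam - 1) with hPdef
  set Q : ℤ := 2 ^ d with hQdef
  have hP : (2:ℤ) ^ lam = 2 * P := by
    rw [hPdef, ← pow_succ']
    congr 1
    omega
  have hP0 : (0:ℤ) < P := by positivity
  have hQP : Q ≤ P := pow_le_pow_right₀ (by norm_num) hd2
  rw [hP] at h1 h2
  -- h1 : Q * (2*P*s) ≤ 2*P*t + m', h2 : 2*P*t + m' < Q*(2*P*s+1)
  have hup : P * (2 * t) < P * (2 * (Q * s) + 1) := by nlinarith
  have hlo : P * (2 * (Q * s)) < P * (2 * t + 2) := by nlinarith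
  have hup' : 2 * t < 2 * (Q * s) + 1 := lt_of_mul_lt_mul_left hup (le_of_lt hP0)
  have hlo' : 2 * (Q * s) < 2 * t + 2 := lt_of_mul_lt_mul_left hlo (le_of_lt hP0)
  have h3 : t ≤ Q * s := by omega
  have h4 : Q * s ≤ t := by omega
  omega

lemma sparse_sum : ∀ (D : Finset ℕ),
    (∀ d ∈ D, ∀ e ∈ D, d ≠ e → d + 2 ≤ e ∨ e + 2 ≤ d) →
    ∀ n : ℕ, (∀ d ∈ D, n ≤ d) →
    ∑ d ∈ D, ((2:ℝ)⁻¹) ^ d ≤ 4 / 3 * ((2:ℝ)⁻¹) ^ n := by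
  intro D
  induction D using Finset.strongInduction with
  | _ D ih =>
    intro hs n hn
    rcases D.eq_empty_or_nonempty with rfl | hne
    · simp
    · set d0 := D.min' hne with hd0
      have hmem : d0 ∈ D := D.min'_mem hne
      have herase : D.erase d0 ⊂ D := Finset.erase_ssubset hmem
      have h1 : ∑ d ∈ D.erase d0, ((2:ℝ)⁻¹) ^ d ≤ 4 / 3 * ((2:ℝ)⁻¹) ^ (d0 + 2) := by
        apply ih _ herase
        · intro a ha b hb hab
          exact hs a (Finset.mem_of_mem_erase ha) b (Finset.mem_of_mem_erase hb) hab
        · intro a ha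
          have haD : a ∈ D := Finset.mem_of_mem_erase ha
          have hane : a ≠ d0 := Finset.ne_of_mem_erase ha
          have hle : d0 ≤ a := D.min'_le a haD
          rcases hs a haD d0 hmem hane with h | h
          · omega
          · omega
      rw [← Finset.add_sum_erase D _ hmem]
      have hd0n : n ≤ d0 := hn d0 hmem
      have hmono : ((2:ℝ)⁻¹) ^ d0 ≤ ((2:ℝ)⁻¹) ^ n :=
        pow_le_pow_of_le_one (by norm_num) (by norm_num) hd0n
      have h2 : ((2:ℝ)⁻¹) ^ (d0 + 2) = ((2:ℝ)⁻¹) ^ d0 / 4 := by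
        rw [pow_add]; norm_num; ring
      rw [h2] at h1
      linarith

/-- Let `λ ≥ 1`, `0 ≤ m ≤ 2^(λ-1)`, and let `𝓑` be a collection of dyadic
intervals (encoded by pairs `(j,k)` with `I = [2^(-j)k, 2^(-j)(k+1))`) such that
`inf I = inf pred_λ(I)` for every `I ∈ 𝓑` (equivalently `2^λ ∣ k`), and such that any two
intervals of distinct lengths in `𝓑` have length ratio at least `4`.  Then for every `I ∈ 𝓑`
the measure of `I ∩ ⋃_{d=1}^{λ-1} ⋃_{J ∈ 𝓑, |J| = 2^{-d}|I|} (J ∪ τ_m(J))` is at most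
`(2/3)|I|`, where `τ_m(J) = J + m|J|`. -/
theorem stmt0 (lam : ℕ) (hlam : 1 ≤ lam) (m : ℕ) (hm : m ≤ 2 ^ (lam - 1))
    (B : Set (ℤ × ℤ))
    (hpred : ∀ p ∈ B, (2 ^ lam : ℤ) ∣ p.2)
    (hsep : ∀ p ∈ B, ∀ q ∈ B, p.1 ≠ q.1 → p.1 + 2 ≤ q.1 ∨ q.1 + 2 ≤ p.1) :
    ∀ p ∈ B,
      volume (dyI p.1 p.2 ∩
        ⋃ d ∈ Finset.Icc 1 (lam - 1), ⋃ q ∈ B, ⋃ (_ : q.1 = p.1 + d),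
          (dyI q.1 q.2 ∪ dyI q.1 (q.2 + m)))
      ≤ ENNReal.ofReal ((2 / 3) * (2:ℝ) ^ (-p.1)) := by
  classical
  intro p hp
  obtain ⟨j, k⟩ := p
  dsimp only at *
  obtain ⟨s, rfl⟩ := hpred (j, k) hp
  set T : ℕ → Set ℝ := fun d =>
    ⋃ q ∈ B, ⋃ (_ : q.1 = j + (d:ℤ)), (dyI q.1 q.2 ∪ dyI q.1 (q.2 + m)) with hT
  have hrw : dyI j (2 ^ lam * s) ∩ ⋃ d ∈ Finset.Icc 1 (lam - 1), T d
      = ⋃ d ∈ Finset.Icc 1 (lam - 1), (dyI j (2 ^ lam * s) ∩ T d) := by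
    simp only [Set.inter_iUnion]
  rw [hrw]
  refine le_trans (measure_biUnion_finset_le _ _) ?_
  set D : Finset ℕ := (Finset.Icc 1 (lam - 1)).filter
    (fun d => ∃ q ∈ B, q.1 = j + (d:ℤ)) with hD
  -- terms outside D vanish
  have hzero : ∀ d ∈ Finset.Icc 1 (lam - 1), d ∉ D →
      volume (dyI j (2 ^ lam * s) ∩ T d) = 0 := by
    intro d hd hnd
    have hno : ¬ ∃ q ∈ B, q.1 = j + (d:ℤ) := by
      intro h
      exact hnd (Finset.mem_filter.mpr ⟨hd, h⟩)
    have : dyI j (2 ^ lam * s) ∩ T d ⊆ ∅ := by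
      rintro x ⟨-, hx⟩
      simp only [hT, Set.mem_iUnion] at hx
      obtain ⟨q, hq, hq1, -⟩ := hx
      exact hno ⟨q, hq, hq1⟩
    exact measure_mono_null this measure_empty
  rw [← Finset.sum_subset (Finset.filter_subset _ _) hzero]
  -- per-d subset bound
  have hsubset : ∀ d ∈ D, dyI j (2 ^ lam * s) ∩ T d ⊆
      dyI (j + d) (2 ^ d * (2 ^ lam * s)) ∪ dyI (j + d) (2 ^ d * (2 ^ lam * s) + m) := by
    intro d hd
    obtain ⟨hdIcc, -⟩ := Finset.mem_filter.mp hd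
    obtain ⟨hd1, hd2⟩ := Finset.mem_Icc.mp hdIcc
    rintro x ⟨hxI, hxT⟩
    simp only [hT, Set.mem_iUnion] at hxT
    obtain ⟨q, hqB, hq1, hxJ⟩ := hxT
    obtain ⟨t, ht⟩ := hpred q hqB
    rw [hq1] at hxJ
    rcases hxJ with hxJ | hxJ
    · obtain ⟨H1, H2⟩ := two_scale hxI hxJ
      rw [ht] at H1 H2
      have hteq : t = 2 ^ d * s :=
        int_key hlam hd2 (m' := 0) le_rfl (by positivity)
          (by linarith) (by linarith)
      have : q.2 = 2 ^ d * (2 ^ lam * s) := by rw [ht, hteq]; ring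
      rw [this] at hxJ
      exact Or.inl hxJ
    · obtain ⟨H1, H2⟩ := two_scale hxI hxJ
      rw [ht] at H1 H2
      have hm' : (m:ℤ) ≤ 2 ^ (lam - 1) := by exact_mod_cast hm
      have hteq : t = 2 ^ d * s :=
        int_key hlam hd2 (m' := (m:ℤ)) (by positivity) hm'
          (by linarith) (by linarith)
      have : q.2 + (m:ℤ) = 2 ^ d * (2 ^ lam * s) + m := by rw [ht, hteq]; ring
      rw [this] at hxJ
      exact Or.inr hxJ
  -- per-d volume bound
  have hvol : ∀ d ∈ D, volume (dyI j (2 ^ lam * s) ∩ T d) ≤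
      ENNReal.ofReal ((2:ℝ) ^ (-(j + (d:ℤ))) + (2:ℝ) ^ (-(j + (d:ℤ)))) := by
    intro d hd
    refine le_trans (measure_mono (hsubset d hd)) ?_
    refine le_trans (measure_union_le _ _) ?_
    rw [vol_dyI, vol_dyI, ← ENNReal.ofReal_add (by positivity) (by positivity)]
  refine le_trans (Finset.sum_le_sum hvol) ?_
  rw [← ENNReal.ofReal_sum_of_nonneg (fun d _ => by positivity)]
  apply ENNReal.ofReal_le_ofReal
  -- real-number estimate
  have hDsep : ∀ d ∈ D, ∀ e ∈ D, d ≠ e → d + 2 ≤ e ∨ e + 2 ≤ d := by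
    intro d hd e he hde
    obtain ⟨q, hq, hq1⟩ := (Finset.mem_filter.mp hd).2
    obtain ⟨r, hr, hr1⟩ := (Finset.mem_filter.mp he).2
    have hne : q.1 ≠ r.1 := by rw [hq1, hr1]; intro h; omega
    have := hsep q hq r hr hne
    rw [hq1, hr1] at this
    omega
  have hD2 : ∀ d ∈ D, 2 ≤ d := by
    intro d hd
    obtain ⟨hdIcc, q, hq, hq1⟩ := Finset.mem_filter.mp hd
    obtain ⟨hd1, -⟩ := Finset.mem_Icc.mp hdIcc
    have hne : (j, 2 ^ lam * s).1 ≠ q.1 := by dsimp only; rw [hq1]; intro h; omega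
    have := hsep (j, 2 ^ lam * s) hp q hq hne
    dsimp only at this
    rw [hq1] at this
    omega
  have hS : ∑ d ∈ D, ((2:ℝ)⁻¹) ^ d ≤ 1 / 3 := by
    have := sparse_sum D hDsep 2 hD2
    norm_num at this
    linarith
  have hterm : ∀ d : ℕ, (2:ℝ) ^ (-(j + (d:ℤ))) = (2:ℝ) ^ (-j) * ((2:ℝ)⁻¹) ^ d := by
    intro d
    rw [neg_add, zpow_add₀ (by norm_num : (2:ℝ) ≠ 0)]
    congr 1
    rw [zpow_neg, zpow_natCast, ← inv_pow]
  calc ∑ d ∈ D, ((2:ℝ) ^ (-(j + (d:ℤ))) + (2:ℝ) ^ (-(j + (d:ℤ))))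
      = (2 * (2:ℝ) ^ (-j)) * ∑ d ∈ D, ((2:ℝ)⁻¹) ^ d := by
        rw [Finset.mul_sum]
        refine Finset.sum_congr rfl fun d _ => ?_
        rw [hterm d]; ring
    _ ≤ (2 * (2:ℝ) ^ (-j)) * (1 / 3) := by
        apply mul_le_mul_of_nonneg_left hS (by positivity)
    _ = 2 / 3 * (2:ℝ) ^ (-j) := by ring
end

section
/- Let λ ≥ 1, 0 ≤ m ≤ 2^{λ-1}, and let 𝓑 be a collection of dyadic intervals with inf I = inf pred_λ(I) for all I ∈ 𝓑, such that any two intervals of distinct lengths in 𝓑 have length ratio at least 4. Then for any I ∈ 𝓑 ∪ τ_m(𝓑), any integer 1 ≤ d ≤ λ-1, and any J, K ∈ 𝓑 with |J| = |K| = 2^{-d}|I|: if both (J ∪ τ_m(J)) ∩ I ≠ ∅ and (K ∪ τ_m(K)) ∩ I ≠ ∅, then J = K. -/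
/-- If a dyadic interval of level `i+d` meets one of level `i`, integer bounds hold. -/
lemma dy_inter (i : ℤ) (d : ℕ) (a b : ℤ)
    (h : (dyI (i + d) a ∩ dyI i b).Nonempty) :
    2 ^ d * b ≤ a ∧ a < 2 ^ d * (b + 1) := by
  obtain ⟨x, ⟨h1, h2⟩, h3, h4⟩ := h
  have hD : (2:ℝ) ^ (-(i + (d:ℤ))) = (2:ℝ) ^ (-i) / 2 ^ d := by
    rw [neg_add, zpow_add₀ (by norm_num : (2:ℝ) ≠ 0), zpow_neg, div_eq_mul_inv]
    norm_num [zpow_natCast]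
  have hc : (0:ℝ) < (2:ℝ) ^ (-i) := by positivity
  have hd : (0:ℝ) < (2:ℝ) ^ (d:ℕ) := by positivity
  rw [hD] at h1 h2
  have H1 : (2:ℝ) ^ (-i) * b < (2:ℝ) ^ (-i) * ((a + 1) / 2 ^ d) := by
    have := lt_of_le_of_lt h3 h2
    rwa [div_mul_eq_mul_div, mul_div_assoc] at this
  have H2 : (2:ℝ) ^ (-i) * (a / 2 ^ d) < (2:ℝ) ^ (-i) * (b + 1) := by
    have := lt_of_le_of_lt h1 h4
    rwa [div_mul_eq_mul_div, mul_div_assoc] at this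
  have H1' : (b:ℝ) < (a + 1) / 2 ^ d := lt_of_mul_lt_mul_left H1 hc.le
  have H2' : (a:ℝ) / 2 ^ d < (b:ℝ) + 1 := lt_of_mul_lt_mul_left H2 hc.le
  rw [lt_div_iff₀ hd] at H1'
  rw [div_lt_iff₀ hd] at H2'
  constructor
  · have : (2:ℝ) ^ d * b < (a:ℝ) + 1 := by nlinarith
    have : (2 ^ d * b : ℤ) < a + 1 := by exact_mod_cast this
    omega
  · have : (a:ℝ) < ((b:ℝ) + 1) * 2 ^ d := by nlinarith
    have : (a : ℤ) < (b + 1) * 2 ^ d := by exact_mod_cast this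
    linarith [this]

/-- Let `λ ≥ 1`, `0 ≤ m ≤ 2^(λ-1)` and let `𝓑` be a collection of dyadic
intervals (encoded by pairs `(j,k)`) with `inf I = inf pred_λ(I)` (i.e. `2^λ ∣ k`) for all
`I ∈ 𝓑`, such that any two intervals of distinct lengths in `𝓑` have length ratio at least 4.
Then for any `I ∈ 𝓑 ∪ τ_m(𝓑)`, any `1 ≤ d ≤ λ-1` and any `J, K ∈ 𝓑` with
`|J| = |K| = 2^{-d}|I|`: if both `(J ∪ τ_m(J)) ∩ I` and `(K ∪ τ_m(K)) ∩ I` are nonempty,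
then `J = K`. -/
theorem stmt1 (lam : ℕ) (hlam : 1 ≤ lam) (m : ℕ) (hm : m ≤ 2 ^ (lam - 1))
    (B : Set (ℤ × ℤ))
    (hpred : ∀ p ∈ B, (2 ^ lam : ℤ) ∣ p.2)
    (hsep : ∀ p ∈ B, ∀ q ∈ B, p.1 ≠ q.1 → p.1 + 2 ≤ q.1 ∨ q.1 + 2 ≤ p.1) :
    ∀ p : ℤ × ℤ, (p ∈ B ∨ ∃ q ∈ B, p = (q.1, q.2 + m)) →
      ∀ d : ℕ, 1 ≤ d → d ≤ lam - 1 →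
        ∀ J ∈ B, ∀ K ∈ B, J.1 = p.1 + d → K.1 = p.1 + d →
          ((dyI J.1 J.2 ∪ dyI J.1 (J.2 + m)) ∩ dyI p.1 p.2).Nonempty →
          ((dyI K.1 K.2 ∪ dyI K.1 (K.2 + m)) ∩ dyI p.1 p.2).Nonempty →
          J = K := by
  intro p _ d _ hd2 J hJ K hK hJ1 hK1 hJint hKint
  -- generic bound extraction
  have key : ∀ c : ℤ, ((dyI (p.1 + d) c ∪ dyI (p.1 + d) (c + m)) ∩ dyI p.1 p.2).Nonempty →
      2 ^ d * p.2 - m ≤ c ∧ c < 2 ^ d * (p.2 + 1) := by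
    intro c ⟨x, hx, hxI⟩
    cases hx with
    | inl h =>
      obtain ⟨l, r⟩ := dy_inter p.1 d c p.2 ⟨x, h, hxI⟩
      constructor
      · have : (0:ℤ) ≤ (m:ℤ) := Int.ofNat_nonneg m
        omega
      · exact r
    | inr h =>
      obtain ⟨l, r⟩ := dy_inter p.1 d (c + m) p.2 ⟨x, h, hxI⟩
      omega
  rw [hJ1] at hJint
  rw [hK1] at hKint
  obtain ⟨lJ, rJ⟩ := key J.2 hJint
  obtain ⟨lK, rK⟩ := key K.2 hKint
  -- size bound : 2^d + m ≤ 2^lam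
  have hsize : (2:ℤ) ^ d + m ≤ 2 ^ lam := by
    have h1 : (2:ℤ) ^ d ≤ 2 ^ (lam - 1) := by
      apply pow_le_pow_right₀ (by norm_num) hd2
    have h2 : (m:ℤ) ≤ 2 ^ (lam - 1) := by exact_mod_cast hm
    have h3 : (2:ℤ) ^ lam = 2 * 2 ^ (lam - 1) := by
      rw [← pow_succ']
      congr 1
      omega
    omega
  have hexp : (2:ℤ) ^ d * (p.2 + 1) = 2 ^ d * p.2 + 2 ^ d := by ring
  have hdvd : (2 ^ lam : ℤ) ∣ (J.2 - K.2) := dvd_sub (hpred J hJ) (hpred K hK)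
  have habs : |J.2 - K.2| < 2 ^ lam := by
    rw [abs_sub_lt_iff]
    constructor <;> omega
  have h2 : J.2 = K.2 := by
    have := Int.eq_zero_of_abs_lt_dvd hdvd habs
    omega
  exact Prod.ext (by rw [hJ1, hK1]) h2
end

section
/- Let λ ≥ 1 and let J, K be two distinct dyadic intervals of the same length |J| = |K| such that inf J = inf pred_λ(J) and inf K = inf pred_λ(K). Then dist(J, K) ≥ (2^λ − 1)|J|. -/
/-- Let `λ ≥ 1` and let `J ≠ K` be dyadic intervals of the same length
`2^(-j)` such that `inf J = inf pred_λ(J)` and `inf K = inf pred_λ(K)` (equivalently,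
`2^λ` divides both position indices).  Then `dist(J,K) ≥ (2^λ - 1)|J|`, i.e. every point of
`J` and every point of `K` are at distance at least `(2^λ - 1) 2^(-j)`. -/
theorem stmt2 (lam : ℕ) (hlam : 1 ≤ lam) (j kJ kK : ℤ) (hne : kJ ≠ kK)
    (hJ : (2 ^ lam : ℤ) ∣ kJ) (hK : (2 ^ lam : ℤ) ∣ kK) :
    ∀ x ∈ dyI j kJ, ∀ y ∈ dyI j kK,
      ((2:ℝ) ^ lam - 1) * (2:ℝ) ^ (-j) ≤ |x - y| := by
  intro x hx y hy
  obtain ⟨a, ha⟩ := hJ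
  obtain ⟨b, hb⟩ := hK
  have hc : (0:ℝ) < (2:ℝ) ^ (-j) := by positivity
  have hab : a ≠ b := by rintro rfl; exact hne (ha.trans hb.symm)
  have key : (2:ℤ) ^ lam ≤ |kJ - kK| := by
    have h1 : kJ - kK = 2 ^ lam * (a - b) := by rw [ha, hb]; ring
    rw [h1, abs_mul, abs_pow]
    have h2 : (1:ℤ) ≤ |a - b| := Int.one_le_abs (sub_ne_zero_of_ne hab)
    have h3 : (0:ℤ) < 2 ^ lam := pow_pos (by norm_num) lam
    calc (2:ℤ) ^ lam = |2| ^ lam * 1 := by norm_num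
    _ ≤ |2| ^ lam * |a - b| := by
        apply mul_le_mul_of_nonneg_left h2 (by positivity)
  have hx1 := hx.1; have hx2 := hx.2
  have hy1 := hy.1; have hy2 := hy.2
  have hpowR : ((2:ℤ) ^ lam : ℝ) = (2:ℝ) ^ lam := by push_cast; ring
  rcases lt_or_gt_of_ne hne with h | h
  · have h2 : kJ + 2 ^ lam ≤ kK := by
      rw [abs_sub_comm, abs_of_pos (by linarith : (0:ℤ) < kK - kJ)] at key
      linarith
    have hcast : (kJ:ℝ) + (2:ℝ) ^ lam ≤ (kK:ℝ) := by exact_mod_cast h2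
    have : ((2:ℝ) ^ lam - 1) * (2:ℝ) ^ (-j) ≤ y - x := by nlinarith
    rw [abs_sub_comm]
    exact this.trans (le_abs_self _)
  · have h2 : kK + 2 ^ lam ≤ kJ := by
      rw [abs_of_pos (by linarith : (0:ℤ) < kJ - kK)] at key
      linarith
    have hcast : (kK:ℝ) + (2:ℝ) ^ lam ≤ (kJ:ℝ) := by exact_mod_cast h2
    have : ((2:ℝ) ^ lam - 1) * (2:ℝ) ^ (-j) ≤ x - y := by nlinarith
    exact this.trans (le_abs_self _)
end

section
/- Let n ≥ 1, j ∈ ℤ, Q a dyadic cube in ℝⁿ with |Q| = 2^{-jn}, and let b ∈ C_c^∞((0,1)ⁿ) with ∫ b = 1 and ∫ xᵢ b(x) dxᵢ = 0 for each coordinate i. Define d(x) = 2ⁿ b(2x) − b(x), d_l(x) = 2^{ln} d(2^l x), and f_{Q,l} = h_Q * d_{j+l}. Then for l ≥ 0 there is a constant C (depending on n and b) such that: ∫ f_{Q,l} = 0, supp f_{Q,l} ⊆ {x : dist(x, D(Q)) ≤ C·2^{-l}diam(Q)}, |f_{Q,l}| ≤ C, and Lip(f_{Q,l}) ≤ C·2^l/diam(Q).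 -/
open MeasureTheory

/-- The dyadic cube in `ℝⁿ` with sidelength `2^(-j)` and position `k : Fin n → ℤ`. -/
noncomputable def cubeSet (n : ℕ) (j : ℤ) (k : Fin n → ℤ) : Set (Fin n → ℝ) :=
  {x | ∀ i, x i ∈ dyI j (k i)}

/-- The `L^∞`-normalized Haar function on `[0,1)`. -/
noncomputable def haar1 (t : ℝ) : ℝ :=
  if 0 ≤ t ∧ t < 1 / 2 then 1 else if 1 / 2 ≤ t ∧ t < 1 then -1 else 0

/-- The `L^∞`-normalized Haar function on the dyadic interval `[2^(-j)k, 2^(-j)(k+1))`. -/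
noncomputable def haarI (j k : ℤ) (t : ℝ) : ℝ :=
  haar1 ((t - (2:ℝ) ^ (-j) * k) * (2:ℝ) ^ j)

/-- The indicator of the dyadic interval `[2^(-j)k, 2^(-j)(k+1))`. -/
noncomputable def indI (j k : ℤ) (t : ℝ) : ℝ := (dyI j k).indicator 1 t

/-- The directional Haar function `h_Q^{(ε)}` on the dyadic cube `Q = Q(j,k) ⊂ ℝⁿ`,
`ε ∈ {0,1}ⁿ` (encoded by `ε : Fin n → Bool`). -/
noncomputable def haarCube (n : ℕ) (j : ℤ) (k : Fin n → ℤ) (ε : Fin n → Bool)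
    (x : Fin n → ℝ) : ℝ :=
  ∏ i, if ε i then haarI j (k i) (x i) else indI j (k i) (x i)

/-- The set of discontinuities `D(Q)` of the Haar function `h_Q^{(ε)}`. -/
noncomputable def discSet (n : ℕ) (j : ℤ) (k : Fin n → ℤ) (ε : Fin n → Bool) :
    Set (Fin n → ℝ) :=
  {x | ¬ ContinuousAt (haarCube n j k ε) x}

/-- The mollifier difference `d(x) = 2ⁿ b(2x) - b(x)`. -/
noncomputable def mollD (n : ℕ) (b : (Fin n → ℝ) → ℝ) (x : Fin n → ℝ) : ℝ :=
  2 ^ n * b (fun i => 2 * x i) - b x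

/-- The rescaled mollifier `d_m(x) = 2^{mn} d(2^m x)`. -/
noncomputable def mollDl (n : ℕ) (b : (Fin n → ℝ) → ℝ) (m : ℤ) (x : Fin n → ℝ) : ℝ :=
  (2:ℝ) ^ (m * (n:ℤ)) * mollD n b (fun i => (2:ℝ) ^ m * x i)

/-- The mollified Haar function `f_{Q,l} = h_Q^{(ε)} * d_{j+l}` for `Q ∈ 𝒬_j`. -/
noncomputable def mollHaar (n : ℕ) (b : (Fin n → ℝ) → ℝ) (j : ℤ) (k : Fin n → ℤ)
    (ε : Fin n → Bool) (l : ℤ) (x : Fin n → ℝ) : ℝ :=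
  ∫ y, haarCube n j k ε y * mollDl n b (j + l) (x - y)

lemma haar1_eq : haar1 = fun t => (Set.Ico (0:ℝ) (1/2)).indicator 1 t
    - (Set.Ico (1/2:ℝ) 1).indicator 1 t := by
  funext t
  simp only [haar1, Set.indicator, Set.mem_Ico, Pi.one_apply]
  split_ifs with h1 h2 h3 h4 h5 <;> norm_num <;> linarith [h1.1, h1.2]

lemma measurable_haar1 : Measurable haar1 := by
  rw [haar1_eq]
  exact ((measurable_const.indicator measurableSet_Ico).sub
    (measurable_const.indicator measurableSet_Ico))

lemma haar1_mem (t : ℝ) : haar1 t ∈ ({-1, 0, 1} : Set ℝ) := by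
  unfold haar1; split_ifs <;> simp

lemma haar1_support {t : ℝ} (h : haar1 t ≠ 0) : t ∈ Set.Ico (0:ℝ) 1 := by
  unfold haar1 at h
  split_ifs at h with h1 h2
  · exact ⟨h1.1, by linarith [h1.2]⟩
  · exact ⟨by linarith [h2.1], h2.2⟩
  · simp at h

lemma haarI_support {j k : ℤ} {t : ℝ} (h : haarI j k t ≠ 0) : t ∈ dyI j k := by
  have := haar1_support h
  have h2j : (0:ℝ) < (2:ℝ)^(-j) := zpow_pos (by norm_num) _
  have hmul : (2:ℝ)^(-j) * (2:ℝ)^j = 1 := by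
    rw [← zpow_add₀ (by norm_num : (2:ℝ) ≠ 0)]; simp
  obtain ⟨h0, h1⟩ := this
  constructor
  · nlinarith
  · nlinarith

lemma haarI_mem (j k : ℤ) (t : ℝ) : haarI j k t ∈ ({-1, 0, 1} : Set ℝ) := haar1_mem _

lemma indI_mem (j k : ℤ) (t : ℝ) : indI j k t ∈ ({-1, 0, 1} : Set ℝ) := by
  unfold indI Set.indicator; split_ifs <;> simp

lemma indI_support {j k : ℤ} {t : ℝ} (h : indI j k t ≠ 0) : t ∈ dyI j k := by
  by_contra hc; exact h (Set.indicator_of_notMem hc 1)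

lemma measurable_haarCube (n : ℕ) (j : ℤ) (k : Fin n → ℤ) (ε : Fin n → Bool) :
    Measurable (haarCube n j k ε) := by
  apply Finset.measurable_prod
  intro i _
  by_cases h : ε i <;> simp only [h, if_true, if_false]
  · exact (measurable_haar1.comp ((measurable_id.sub measurable_const).mul measurable_const)).comp (measurable_pi_apply i)
  · exact (measurable_const.indicator measurableSet_Ico).comp (measurable_pi_apply i)

lemma abs_mem_triple {a : ℝ} (h : a ∈ ({-1, 0, 1} : Set ℝ)) : |a| ≤ 1 := by
  simp only [Set.mem_insert_iff, Set.mem_singleton_iff] at h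
  rcases h with h | h | h <;> simp [h]

lemma haarCube_mem (n : ℕ) (j : ℤ) (k : Fin n → ℤ) (ε : Fin n → Bool) (x : Fin n → ℝ) :
    haarCube n j k ε x ∈ ({-1, 0, 1} : Set ℝ) := by
  unfold haarCube
  induction (Finset.univ : Finset (Fin n)) using Finset.induction with
  | empty => simp
  | @insert a s hnot ih =>
    rw [Finset.prod_insert hnot]
    have h1 : (if ε a then haarI j (k a) (x a) else indI j (k a) (x a)) ∈ ({-1,0,1}:Set ℝ) := by
      split_ifs
      · exact haarI_mem _ _ _
      · exact indI_mem _ _ _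
    simp only [Set.mem_insert_iff, Set.mem_singleton_iff] at h1 ih ⊢
    rcases h1 with h | h | h <;> rcases ih with h' | h' | h' <;>
      rw [h, h'] <;> norm_num

lemma abs_haarCube_le (n : ℕ) (j : ℤ) (k : Fin n → ℤ) (ε : Fin n → Bool) (x : Fin n → ℝ) :
    |haarCube n j k ε x| ≤ 1 := abs_mem_triple (haarCube_mem n j k ε x)

lemma haarCube_support {n : ℕ} {j : ℤ} {k : Fin n → ℤ} {ε : Fin n → Bool} {x : Fin n → ℝ}
    (h : haarCube n j k ε x ≠ 0) : x ∈ cubeSet n j k := by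
  intro i
  have hi : (if ε i then haarI j (k i) (x i) else indI j (k i) (x i)) ≠ 0 := by
    intro h0
    exact h (Finset.prod_eq_zero (Finset.mem_univ i) h0)
  split_ifs at hi with hε
  · exact haarI_support hi
  · exact indI_support hi

lemma dyI_eq (j k : ℤ) : dyI j k = Set.Ico ((2:ℝ)^(-j) * k) ((2:ℝ)^(-j) * k + (2:ℝ)^(-j)) := by
  unfold dyI; congr 1; push_cast; ring

lemma cubeSet_eq (n : ℕ) (j : ℤ) (k : Fin n → ℤ) :
    cubeSet n j k = Set.univ.pi (fun i => dyI j (k i)) := by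
  ext x; simp [cubeSet, Set.mem_univ_pi]

lemma mem_dyI_iff {j k : ℤ} {t : ℝ} : t ∈ dyI j k ↔
    (2:ℝ)^(-j) * k ≤ t ∧ t < (2:ℝ)^(-j) * k + (2:ℝ)^(-j) := by
  rw [dyI_eq]; rfl

lemma cubeSet_bounded (n : ℕ) (j : ℤ) (k : Fin n → ℤ) :
    cubeSet n j k ⊆ Metric.closedBall (fun i => (2:ℝ)^(-j) * (k i)) ((2:ℝ)^(-j)) := by
  have h2j : (0:ℝ) < (2:ℝ)^(-j) := zpow_pos (by norm_num) _
  intro x hx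
  rw [Metric.mem_closedBall, dist_pi_le_iff h2j.le]
  intro i
  obtain ⟨h1, h2⟩ := mem_dyI_iff.1 (hx i)
  rw [Real.dist_eq, abs_le]
  constructor <;> linarith

lemma diam_cubeSet (n : ℕ) (hn : 1 ≤ n) (j : ℤ) (k : Fin n → ℤ) :
    Metric.diam (cubeSet n j k) = (2:ℝ)^(-j) := by
  have h2j : (0:ℝ) < (2:ℝ)^(-j) := zpow_pos (by norm_num) _
  apply le_antisymm
  · apply Metric.diam_le_of_forall_dist_le h2j.le
    intro x hx y hy
    rw [dist_pi_le_iff h2j.le]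
    intro i
    obtain ⟨hx1, hx2⟩ := mem_dyI_iff.1 (hx i)
    obtain ⟨hy1, hy2⟩ := mem_dyI_iff.1 (hy i)
    rw [Real.dist_eq, abs_le]
    constructor <;> linarith
  · have hbd : Bornology.IsBounded (cubeSet n j k) :=
      (Metric.isBounded_closedBall).subset (cubeSet_bounded n j k)
    apply le_of_forall_sub_le
    intro δ hδ
    rcases le_or_gt ((2:ℝ)^(-j)) δ with h | h
    · have := Metric.diam_nonneg (s := cubeSet n j k); linarith
    have hc0 : (0:ℝ) < (2:ℝ)^(-j) - δ := sub_pos.2 h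
    set c : ℝ := (2:ℝ)^(-j) - δ with hc
    have hpmem : (fun i => (2:ℝ)^(-j) * (k i)) ∈ cubeSet n j k := by
      intro i; rw [mem_dyI_iff]; beta_reduce
      exact ⟨le_refl _, by linarith⟩
    have hqmem : (fun i => (2:ℝ)^(-j) * (k i) + c) ∈ cubeSet n j k := by
      intro i; rw [mem_dyI_iff]; beta_reduce
      constructor
      · linarith
      · simp only [hc]; linarith
    have i0 : Fin n := ⟨0, hn⟩
    have hd : dist ((2:ℝ)^(-j) * (k i0)) ((2:ℝ)^(-j) * (k i0) + c)
        ≤ dist (fun i => (2:ℝ)^(-j) * (k i)) (fun i => (2:ℝ)^(-j) * (k i) + c) :=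
      dist_le_pi_dist (X := fun _ : Fin n => ℝ) (fun i => (2:ℝ)^(-j) * (k i))
        (fun i => (2:ℝ)^(-j) * (k i) + c) i0
    have hdc : dist ((2:ℝ)^(-j) * (k i0)) ((2:ℝ)^(-j) * (k i0) + c) = c := by
      simp only [Real.dist_eq]
      rw [show (2:ℝ)^(-j) * (k i0) - ((2:ℝ)^(-j) * (k i0) + c) = -c by ring, abs_neg,
        abs_of_nonneg hc0.le]
    calc (2:ℝ)^(-j) - δ = dist ((2:ℝ)^(-j) * (k i0)) ((2:ℝ)^(-j) * (k i0) + c) := hdc.symm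
      _ ≤ dist (fun i => (2:ℝ)^(-j) * (k i)) (fun i => (2:ℝ)^(-j) * (k i) + c) := hd
      _ ≤ Metric.diam (cubeSet n j k) := Metric.dist_le_diam_of_mem hbd hpmem hqmem

section moll

variable {n : ℕ} {b : (Fin n → ℝ) → ℝ}

lemma mollD_eq : mollD n b = fun x => 2 ^ n * b ((2:ℝ) • x) - b x := rfl

lemma mollDl_eq (m : ℤ) :
    mollDl n b m = fun x => (2:ℝ) ^ (m * (n:ℤ)) * mollD n b (((2:ℝ)^m) • x) := rfl

lemma contDiff_mollD (hsm : ContDiff ℝ (⊤ : ℕ∞) b) : ContDiff ℝ (⊤ : ℕ∞) (mollD n b) := by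
  rw [mollD_eq]
  exact (contDiff_const.mul (hsm.comp (contDiff_id.const_smul (2:ℝ)))).sub hsm

lemma hcs_mollD (hcs : HasCompactSupport b) : HasCompactSupport (mollD n b) := by
  rw [mollD_eq]
  have h1 : HasCompactSupport (fun x : Fin n → ℝ => 2 ^ n * b ((2:ℝ) • x)) :=
    (hcs.comp_smul (by norm_num : (2:ℝ) ≠ 0)).mul_left
  have h2 : HasCompactSupport (fun x : Fin n → ℝ => -(b x)) := hcs.neg
  have := h1.add h2
  simpa [sub_eq_add_neg, Pi.add_def] using this

lemma mollD_support (hsupp : Function.support b ⊆ Set.univ.pi fun _ : Fin n => Set.Ioo (0:ℝ) 1)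
    {x : Fin n → ℝ} (h : mollD n b x ≠ 0) : ∀ i, x i ∈ Set.Ioo (0:ℝ) 1 := by
  intro i
  have : b (fun i => 2 * x i) ≠ 0 ∨ b x ≠ 0 := by
    by_contra hc
    push_neg at hc
    simp [mollD, hc.1, hc.2] at h
  rcases this with h1 | h1
  · have := hsupp h1 i (Set.mem_univ i)
    simp only [Set.mem_Ioo] at this ⊢
    constructor <;> linarith [this.1, this.2]
  · exact hsupp h1 i (Set.mem_univ i)

lemma finrank_pi_real : Module.finrank ℝ (Fin n → ℝ) = n := by
  rw [Module.finrank_pi]; simp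

lemma integral_comp_smul_zpow (g : (Fin n → ℝ) → ℝ) (m : ℤ) :
    ∫ x, (2:ℝ) ^ (m * (n:ℤ)) * g (((2:ℝ)^m) • x) = ∫ x, g x := by
  rw [integral_const_mul, MeasureTheory.Measure.integral_comp_smul volume g ((2:ℝ)^m)]
  rw [finrank_pi_real, smul_eq_mul, ← mul_assoc]
  have h1 : (((2:ℝ)^m)^n)⁻¹ = (2:ℝ)^(-(m * (n:ℤ))) := by
    rw [← zpow_natCast ((2:ℝ)^m) n, ← zpow_mul, ← zpow_neg]
  rw [h1, abs_of_pos (zpow_pos (by norm_num) _), ← zpow_add₀ (by norm_num : (2:ℝ) ≠ 0)]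
  simp

lemma integral_mollD (hsm : ContDiff ℝ (⊤ : ℕ∞) b) (hcs : HasCompactSupport b) :
    ∫ x, mollD n b x = 0 := by
  have hb_int : Integrable b := hsm.continuous.integrable_of_hasCompactSupport hcs
  have h2 : Integrable (fun x : Fin n → ℝ => b ((2:ℝ) • x)) :=
    (hsm.continuous.comp (continuous_const_smul (2:ℝ))).integrable_of_hasCompactSupport
      (hcs.comp_smul (by norm_num : (2:ℝ) ≠ 0))
  rw [mollD_eq]
  rw [integral_sub (h2.const_mul _) hb_int, integral_const_mul,
    MeasureTheory.Measure.integral_comp_smul volume b (2:ℝ), finrank_pi_real, smul_eq_mul]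
  have : |(((2:ℝ)^n)⁻¹)| = ((2:ℝ)^n)⁻¹ := abs_of_pos (by positivity)
  rw [this, ← mul_assoc, mul_inv_cancel₀ (by positivity), one_mul, sub_self]

lemma integral_mollDl (hsm : ContDiff ℝ (⊤ : ℕ∞) b) (hcs : HasCompactSupport b) (m : ℤ) :
    ∫ x, mollDl n b m x = 0 := by
  rw [mollDl_eq]
  rw [integral_comp_smul_zpow (mollD n b) m]
  exact integral_mollD hsm hcs

lemma continuous_mollDl (hsm : ContDiff ℝ (⊤ : ℕ∞) b) (m : ℤ) : Continuous (mollDl n b m) := by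
  rw [mollDl_eq]
  exact continuous_const.mul ((contDiff_mollD hsm).continuous.comp
    (continuous_const_smul _))

lemma hcs_mollDl (hcs : HasCompactSupport b) (m : ℤ) : HasCompactSupport (mollDl n b m) := by
  rw [mollDl_eq]
  exact ((hcs_mollD hcs).comp_smul (by positivity : ((2:ℝ)^m) ≠ 0)).mul_left

lemma integrable_mollDl (hsm : ContDiff ℝ (⊤ : ℕ∞) b) (hcs : HasCompactSupport b) (m : ℤ) :
    Integrable (mollDl n b m) :=
  (continuous_mollDl hsm m).integrable_of_hasCompactSupport (hcs_mollDl hcs m)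

lemma integral_abs_mollDl (m : ℤ) :
    ∫ x, |mollDl n b m x| = ∫ x, |mollD n b x| := by
  rw [mollDl_eq]
  have : ∀ x : Fin n → ℝ, |(2:ℝ) ^ (m * (n:ℤ)) * mollD n b (((2:ℝ)^m) • x)|
      = (2:ℝ) ^ (m * (n:ℤ)) * |mollD n b (((2:ℝ)^m) • x)| := by
    intro x
    rw [abs_mul, abs_of_pos (zpow_pos (by norm_num) _)]
  simp_rw [this]
  exact integral_comp_smul_zpow (fun x => |mollD n b x|) m

lemma mollDl_support (hsupp : Function.support b ⊆ Set.univ.pi fun _ : Fin n => Set.Ioo (0:ℝ) 1)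
    {m : ℤ} {x : Fin n → ℝ} (h : mollDl n b m x ≠ 0) :
    ∀ i, x i ∈ Set.Ioo (0:ℝ) ((2:ℝ)^(-m)) := by
  intro i
  have hd : mollD n b (fun i => (2:ℝ)^m * x i) ≠ 0 := by
    intro h0; rw [mollDl, h0, mul_zero] at h; exact h rfl
  have := mollD_support hsupp hd i
  simp only [Set.mem_Ioo] at this ⊢
  have h2m : (0:ℝ) < (2:ℝ)^m := zpow_pos (by norm_num) _
  constructor
  · nlinarith [this.1, h2m]
  · rw [zpow_neg, inv_eq_one_div, lt_div_iff₀ h2m]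
    nlinarith [this.2]

lemma abs_mollDl_le {M : ℝ} (hM : ∀ x, |mollD n b x| ≤ M) (m : ℤ) (x : Fin n → ℝ) :
    |mollDl n b m x| ≤ (2:ℝ)^(m * (n:ℤ)) * M := by
  rw [mollDl, abs_mul, abs_of_pos (zpow_pos (by norm_num) _)]
  exact mul_le_mul_of_nonneg_left (hM _) (zpow_pos (by norm_num : (0:ℝ) < 2) _).le

lemma mollDl_lip {K : NNReal} (hK : LipschitzWith K (mollD n b)) (m : ℤ) (x y : Fin n → ℝ) :
    |mollDl n b m x - mollDl n b m y|
      ≤ (2:ℝ)^(m * (n:ℤ)) * ((2:ℝ)^m * ((K:ℝ) * dist x y)) := by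
  rw [mollDl_eq]
  have h1 : |(2:ℝ) ^ (m * (n:ℤ)) * mollD n b (((2:ℝ)^m) • x)
      - (2:ℝ) ^ (m * (n:ℤ)) * mollD n b (((2:ℝ)^m) • y)|
      = (2:ℝ)^(m * (n:ℤ)) * |mollD n b (((2:ℝ)^m) • x) - mollD n b (((2:ℝ)^m) • y)| := by
    rw [← mul_sub, abs_mul, abs_of_pos (zpow_pos (by norm_num) _)]
  beta_reduce
  rw [h1]
  apply mul_le_mul_of_nonneg_left _ (zpow_pos (by norm_num : (0:ℝ) < 2) _).le
  have h2 := hK.dist_le_mul (((2:ℝ)^m) • x) (((2:ℝ)^m) • y)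
  rw [Real.dist_eq] at h2
  have h3 : dist (((2:ℝ)^m) • x) (((2:ℝ)^m) • y) = (2:ℝ)^m * dist x y := by
    rw [dist_smul₀, Real.norm_eq_abs, abs_of_pos (zpow_pos (by norm_num) _)]
  rw [h3] at h2
  calc |mollD n b (((2:ℝ)^m) • x) - mollD n b (((2:ℝ)^m) • y)|
      ≤ (K:ℝ) * ((2:ℝ)^m * dist x y) := h2
    _ = (2:ℝ)^m * ((K:ℝ) * dist x y) := by ring

lemma mollDl_sub_support
    (hsupp : Function.support b ⊆ Set.univ.pi fun _ : Fin n => Set.Ioo (0:ℝ) 1)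
    {m : ℤ} {x u : Fin n → ℝ} (h : mollDl n b m (x - u) ≠ 0) :
    dist u x ≤ (2:ℝ)^(-m) := by
  have h2m : (0:ℝ) < (2:ℝ)^(-m) := zpow_pos (by norm_num) _
  rw [dist_pi_le_iff h2m.le]
  intro i
  have := mollDl_support hsupp h i
  simp only [Pi.sub_apply, Set.mem_Ioo] at this
  rw [Real.dist_eq, abs_le]
  constructor <;> linarith [this.1, this.2]

end moll

lemma integrable_haarCube (n : ℕ) (j : ℤ) (k : Fin n → ℤ) (ε : Fin n → Bool) :
    Integrable (haarCube n j k ε) := by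
  have hmeas : AEStronglyMeasurable (haarCube n j k ε) volume :=
    (measurable_haarCube n j k ε).aestronglyMeasurable
  set p : Fin n → ℝ := fun i => (2:ℝ)^(-j) * (k i) with hp
  have hind : Integrable ((Metric.closedBall p ((2:ℝ)^(-j))).indicator (fun _ => (1:ℝ))) := by
    rw [integrable_indicator_iff measurableSet_closedBall]
    exact integrableOn_const measure_closedBall_lt_top.ne
  apply hind.mono' hmeas
  filter_upwards with y
  rw [Real.norm_eq_abs]
  by_cases hy : haarCube n j k ε y = 0
  · rw [hy, abs_zero]
    exact Set.indicator_nonneg (by intro _ _; norm_num) _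
  · have hmem : y ∈ Metric.closedBall p ((2:ℝ)^(-j)) := cubeSet_bounded n j k (haarCube_support hy)
    rw [Set.indicator_of_mem hmem]
    exact abs_haarCube_le n j k ε y

lemma triple_aux {S : Set ℝ} (hoc : S.OrdConnected) (hsub : S ⊆ {-1, 0, 1})
    {a c : ℝ} (ha : a ∈ S) (hc : c ∈ S) (hlt : a < c) : False := by
  have h1 := hsub ha; have h2 := hsub hc
  simp only [Set.mem_insert_iff, Set.mem_singleton_iff] at h1 h2
  have hle : a + 1/2 ≤ c := by
    rcases h1 with rfl | rfl | rfl <;> rcases h2 with rfl | rfl | rfl <;> norm_num <;> linarith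
  have hm : a + 1/2 ∈ S := hoc.out ha hc ⟨by linarith, hle⟩
  have h3 := hsub hm
  simp only [Set.mem_insert_iff, Set.mem_singleton_iff] at h3
  rcases h1 with rfl | rfl | rfl <;> rcases h3 with h3 | h3 | h3 <;> norm_num at h3

lemma triple_preconnected_const {S : Set ℝ} (hS : IsPreconnected S)
    (hsub : S ⊆ {-1, 0, 1}) {a c : ℝ} (ha : a ∈ S) (hc : c ∈ S) : a = c := by
  have hoc := hS.ordConnected
  by_contra hne
  rcases lt_or_gt_of_ne hne with hlt | hlt
  · exact triple_aux hoc hsub ha hc hlt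
  · exact triple_aux hoc hsub hc ha hlt

lemma haarCube_const_on_ball {n : ℕ} {j : ℤ} {k : Fin n → ℤ} {ε : Fin n → Bool}
    {x : Fin n → ℝ} {ρ : ℝ} (hρ : 0 < ρ)
    (hball : ∀ y ∈ Metric.ball x ρ, ContinuousAt (haarCube n j k ε) y) :
    ∀ u ∈ Metric.ball x ρ, haarCube n j k ε u = haarCube n j k ε x := by
  have hco : ContinuousOn (haarCube n j k ε) (Metric.ball x ρ) :=
    fun y hy => (hball y hy).continuousWithinAt
  have himg : IsPreconnected (haarCube n j k ε '' Metric.ball x ρ) :=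
    ((convex_ball x ρ).isPreconnected).image _ hco
  have hsub : haarCube n j k ε '' Metric.ball x ρ ⊆ {-1, 0, 1} := by
    rintro _ ⟨u, _, rfl⟩; exact haarCube_mem n j k ε u
  intro u hu
  exact triple_preconnected_const himg hsub ⟨u, hu, rfl⟩ ⟨x, Metric.mem_ball_self hρ, rfl⟩

/-- Let `Q` be a dyadic cube of scale `j` in `ℝⁿ`, `b ∈ C_c^∞((0,1)ⁿ)`
with `∫ b = 1` and vanishing first moments in each coordinate, `d(x) = 2ⁿ b(2x) - b(x)`,
`d_m(x) = 2^{mn} d(2^m x)` and `f_{Q,l} = h_Q * d_{j+l}`.  Then for `l ≥ 0` there is a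
constant `C > 0` (depending only on `n` and `b`) such that `∫ f_{Q,l} = 0`,
`supp f_{Q,l} ⊆ {x : dist(x, D(Q)) ≤ C 2^{-l} diam Q}`, `|f_{Q,l}| ≤ C`, and
`Lip(f_{Q,l}) ≤ C 2^l / diam Q`. -/
theorem stmt14 (n : ℕ) (hn : 1 ≤ n) (b : (Fin n → ℝ) → ℝ)
    (hsm : ContDiff ℝ (⊤ : ℕ∞) b) (hcs : HasCompactSupport b)
    (hsupp : Function.support b ⊆ Set.univ.pi fun _ : Fin n => Set.Ioo (0:ℝ) 1)
    (hint : (∫ x, b x) = 1)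
    (hmom : ∀ i : Fin n, ∀ x : Fin n → ℝ, (∫ s : ℝ, s * b (Function.update x i s)) = 0) :
    ∃ C : ℝ, 0 < C ∧
      ∀ (j : ℤ) (k : Fin n → ℤ) (ε : Fin n → Bool), ε ≠ (fun _ => false) →
        ∀ l : ℤ, 0 ≤ l →
          ((∫ x, mollHaar n b j k ε l x) = 0 ∧
           Function.support (mollHaar n b j k ε l) ⊆
             {x | Metric.infDist x (discSet n j k ε) ≤
                C * (2:ℝ) ^ (-l) * Metric.diam (cubeSet n j k)} ∧
           (∀ x, |mollHaar n b j k ε l x| ≤ C) ∧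
           (∀ x y, |mollHaar n b j k ε l x - mollHaar n b j k ε l y| ≤
              C * (2:ℝ) ^ l / Metric.diam (cubeSet n j k) * dist x y)) := by
  obtain ⟨K, hK⟩ := ContDiff.lipschitzWith_of_hasCompactSupport (hcs_mollD hcs)
    (contDiff_mollD hsm) (by simp)
  set I := ∫ x, |mollD n b x| with hI
  have hI0 : 0 ≤ I := integral_nonneg (fun x => abs_nonneg _)
  set C : ℝ := 2^(n+1) * ((K:ℝ) + 1) + I + 2 with hC
  have hC0 : 0 < C := by positivity
  refine ⟨C, hC0, ?_⟩
  intro j k ε hε l hl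
  set m := j + l with hm
  have hint_dm : Integrable (mollDl n b m) := integrable_mollDl hsm hcs m
  have hint_h : Integrable (haarCube n j k ε) := integrable_haarCube n j k ε
  have h2 : (0:ℝ) < 2 := by norm_num
  have h2m : (0:ℝ) < (2:ℝ)^(-m) := zpow_pos h2 _
  have hdiam : Metric.diam (cubeSet n j k) = (2:ℝ)^(-j) := diam_cubeSet n hn j k
  have h2mj : (2:ℝ)^(-m) = (2:ℝ)^(-l) * (2:ℝ)^(-j) := by
    rw [hm, neg_add, zpow_add₀ (by norm_num : (2:ℝ) ≠ 0), mul_comm]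
  have hix : ∀ x, Integrable (fun u => haarCube n j k ε u * mollDl n b m (x - u)) := by
    intro x
    exact (hint_dm.comp_sub_left x).bdd_mul
      (measurable_haarCube n j k ε).aestronglyMeasurable
      (Filter.Eventually.of_forall fun u => by rw [Real.norm_eq_abs]; exact abs_haarCube_le n j k ε u)
  refine ⟨?_, ?_, ?_, ?_⟩
  · -- integral zero
    have hconv : mollHaar n b j k ε l
        = MeasureTheory.convolution (haarCube n j k ε) (mollDl n b m)
            (ContinuousLinearMap.mul ℝ ℝ) volume := rfl
    calc (∫ x, mollHaar n b j k ε l x)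
        = ∫ x, MeasureTheory.convolution (haarCube n j k ε) (mollDl n b m)
            (ContinuousLinearMap.mul ℝ ℝ) volume x := by rw [hconv]
      _ = (ContinuousLinearMap.mul ℝ ℝ) (∫ x, haarCube n j k ε x) (∫ x, mollDl n b m x) :=
          integral_convolution _ hint_h hint_dm
      _ = 0 := by rw [integral_mollDl hsm hcs m]; simp
  · -- support
    intro x hx
    rw [Function.mem_support] at hx
    simp only [Set.mem_setOf_eq]
    by_contra hcon
    push_neg at hcon
    set ρ : ℝ := 2 * (2:ℝ)^(-m) with hρ
    have hρpos : 0 < ρ := by positivity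
    have hρle : ρ ≤ C * (2:ℝ)^(-l) * Metric.diam (cubeSet n j k) := by
      rw [hdiam, hρ, h2mj, ← mul_assoc]
      have h2l : (0:ℝ) < (2:ℝ)^(-l) := zpow_pos h2 _
      have h2j : (0:ℝ) < (2:ℝ)^(-j) := zpow_pos h2 _
      have hC2 : (2:ℝ) ≤ C := by
        rw [hC]
        have : (0:ℝ) ≤ 2^(n+1) * ((K:ℝ) + 1) := by positivity
        linarith
      nlinarith
    have hball : ∀ u ∈ Metric.ball x ρ, ContinuousAt (haarCube n j k ε) u := by
      intro u hu
      by_contra hcont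
      have hmem : u ∈ discSet n j k ε := hcont
      have h1 : Metric.infDist x (discSet n j k ε) ≤ dist x u :=
        Metric.infDist_le_dist_of_mem hmem
      rw [Metric.mem_ball, dist_comm] at hu
      linarith
    have hconst := haarCube_const_on_ball hρpos hball
    apply hx
    have heq : ∀ u, haarCube n j k ε u * mollDl n b m (x - u)
        = haarCube n j k ε x * mollDl n b m (x - u) := by
      intro u
      by_cases hd : mollDl n b m (x - u) = 0
      · rw [hd, mul_zero, mul_zero]
      · have hdist := mollDl_sub_support hsupp hd
        have humem : u ∈ Metric.ball x ρ := by
          rw [Metric.mem_ball, dist_comm]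
          calc dist x u = dist u x := dist_comm x u
            _ ≤ (2:ℝ)^(-m) := hdist
            _ < ρ := by rw [hρ]; linarith
        rw [hconst u humem]
    calc mollHaar n b j k ε l x
        = ∫ u, haarCube n j k ε x * mollDl n b m (x - u) := by
          rw [mollHaar, ← hm]; exact integral_congr_ae (Filter.Eventually.of_forall heq)
      _ = haarCube n j k ε x * ∫ u, mollDl n b m (x - u) := integral_const_mul _ _
      _ = haarCube n j k ε x * ∫ u, mollDl n b m u := by
          rw [integral_sub_left_eq_self (mollDl n b m) volume x]
      _ = 0 := by rw [integral_mollDl hsm hcs m, mul_zero]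
  · -- bound
    intro x
    have hgi : Integrable (fun y => |mollDl n b m (x - y)|) := (hint_dm.comp_sub_left x).abs
    have hb : ∀ y, ‖haarCube n j k ε y * mollDl n b m (x - y)‖
        ≤ |mollDl n b m (x - y)| := by
      intro y
      rw [Real.norm_eq_abs, abs_mul]
      calc |haarCube n j k ε y| * |mollDl n b m (x - y)|
          ≤ 1 * |mollDl n b m (x - y)| :=
            mul_le_mul_of_nonneg_right (abs_haarCube_le n j k ε y) (abs_nonneg _)
        _ = _ := one_mul _
    have key : |mollHaar n b j k ε l x| ≤ I := by
      calc |mollHaar n b j k ε l x|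
          = ‖∫ y, haarCube n j k ε y * mollDl n b m (x - y)‖ := by
            rw [Real.norm_eq_abs]; rw [mollHaar, ← hm]
        _ ≤ ∫ y, |mollDl n b m (x - y)| :=
            norm_integral_le_of_norm_le hgi (Filter.Eventually.of_forall hb)
        _ = ∫ y, |mollDl n b m y| :=
            integral_sub_left_eq_self (fun y => |mollDl n b m y|) volume x
        _ = I := integral_abs_mollDl m
    have : (0:ℝ) ≤ 2^(n+1) * ((K:ℝ) + 1) := by positivity
    calc |mollHaar n b j k ε l x| ≤ I := key
      _ ≤ C := by rw [hC]; linarith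
  · -- Lipschitz
    intro x y
    have hdxy : (0:ℝ) ≤ dist x y := dist_nonneg
    set L4 : ℝ := (2:ℝ)^(m*(n:ℤ)) * ((2:ℝ)^m * ((K:ℝ) * dist x y)) with hL4
    have hL40 : 0 ≤ L4 := by positivity
    set S : Set (Fin n → ℝ) :=
      Metric.closedBall x ((2:ℝ)^(-m)) ∪ Metric.closedBall y ((2:ℝ)^(-m)) with hS
    have hSmeas : MeasurableSet S :=
      measurableSet_closedBall.union measurableSet_closedBall
    have hvol : (volume S).toReal ≤ 2 * (2 * (2:ℝ)^(-m))^n := by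
      have hv1 : volume (Metric.closedBall x ((2:ℝ)^(-m)))
          = ENNReal.ofReal ((2 * (2:ℝ)^(-m))^n) := by
        rw [Real.volume_pi_closedBall x h2m.le]; simp
      have hv2 : volume (Metric.closedBall y ((2:ℝ)^(-m)))
          = ENNReal.ofReal ((2 * (2:ℝ)^(-m))^n) := by
        rw [Real.volume_pi_closedBall y h2m.le]; simp
      have hle : volume S ≤ ENNReal.ofReal (2 * (2 * (2:ℝ)^(-m))^n) := by
        calc volume S ≤ _ + _ := measure_union_le _ _
          _ = ENNReal.ofReal ((2 * (2:ℝ)^(-m))^n) + ENNReal.ofReal ((2 * (2:ℝ)^(-m))^n) := by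
              rw [hv1, hv2]
          _ = ENNReal.ofReal (2 * (2 * (2:ℝ)^(-m))^n) := by
              rw [← ENNReal.ofReal_add (by positivity) (by positivity)]; ring_nf
      exact ENNReal.toReal_le_of_le_ofReal (by positivity) hle
    have hSfin : volume S < ⊤ := by
      apply lt_of_le_of_lt (measure_union_le _ _)
      exact ENNReal.add_lt_top.2 ⟨measure_closedBall_lt_top, measure_closedBall_lt_top⟩
    have hind_int : Integrable (S.indicator fun _ => L4) := by
      rw [integrable_indicator_iff hSmeas]
      exact integrableOn_const hSfin.ne
    have hbnd : ∀ u, ‖haarCube n j k ε u * mollDl n b m (x - u)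
        - haarCube n j k ε u * mollDl n b m (y - u)‖ ≤ S.indicator (fun _ => L4) u := by
      intro u
      rw [← mul_sub, Real.norm_eq_abs, abs_mul]
      by_cases hu : u ∈ S
      · rw [Set.indicator_of_mem hu]
        have hlip : |mollDl n b m (x - u) - mollDl n b m (y - u)| ≤ L4 := by
          calc |mollDl n b m (x - u) - mollDl n b m (y - u)|
              ≤ (2:ℝ)^(m*(n:ℤ)) * ((2:ℝ)^m * ((K:ℝ) * dist (x - u) (y - u))) :=
                mollDl_lip hK m (x - u) (y - u)
            _ = L4 := by rw [dist_sub_right, hL4]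
        calc |haarCube n j k ε u| * |mollDl n b m (x - u) - mollDl n b m (y - u)|
            ≤ 1 * L4 := mul_le_mul (abs_haarCube_le n j k ε u) hlip (abs_nonneg _) zero_le_one
          _ = L4 := one_mul _
      · rw [Set.indicator_of_notMem hu]
        have h1 : mollDl n b m (x - u) = 0 := by
          by_contra h0
          exact hu (Or.inl (Metric.mem_closedBall.2 (mollDl_sub_support hsupp h0)))
        have h2' : mollDl n b m (y - u) = 0 := by
          by_contra h0
          exact hu (Or.inr (Metric.mem_closedBall.2 (mollDl_sub_support hsupp h0)))
        rw [h1, h2', sub_zero, abs_zero, mul_zero]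
    have key : |mollHaar n b j k ε l x - mollHaar n b j k ε l y|
        ≤ 2 * (2 * (2:ℝ)^(-m))^n * L4 := by
      calc |mollHaar n b j k ε l x - mollHaar n b j k ε l y|
          = ‖∫ u, (haarCube n j k ε u * mollDl n b m (x - u)
              - haarCube n j k ε u * mollDl n b m (y - u))‖ := by
            rw [Real.norm_eq_abs, mollHaar, mollHaar, ← hm,
              integral_sub (hix x) (hix y)]
        _ ≤ ∫ u, S.indicator (fun _ => L4) u :=
            norm_integral_le_of_norm_le hind_int (Filter.Eventually.of_forall hbnd)
        _ = (volume S).toReal • L4 := integral_indicator_const L4 hSmeas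
        _ ≤ 2 * (2 * (2:ℝ)^(-m))^n * L4 := by
            rw [smul_eq_mul]
            exact mul_le_mul_of_nonneg_right hvol hL40
    have halg : 2 * (2 * (2:ℝ)^(-m))^n * L4
        = 2^(n+1) * (K:ℝ) * ((2:ℝ)^m * dist x y) := by
      rw [hL4, mul_pow]
      have hzz : ((2:ℝ)^(-m))^n = (2:ℝ)^((-m) * (n:ℤ)) := by
        rw [← zpow_natCast ((2:ℝ)^(-m)) n, ← zpow_mul]
      rw [hzz]
      have hcan : (2:ℝ)^((-m) * (n:ℤ)) * (2:ℝ)^(m * (n:ℤ)) = 1 := by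
        rw [← zpow_add₀ (by norm_num : (2:ℝ) ≠ 0), neg_mul, neg_add_cancel, zpow_zero]
      calc 2 * ((2:ℝ)^n * (2:ℝ)^((-m) * (n:ℤ)))
            * ((2:ℝ)^(m*(n:ℤ)) * ((2:ℝ)^m * ((K:ℝ) * dist x y)))
          = 2 * (2:ℝ)^n * ((2:ℝ)^((-m) * (n:ℤ)) * (2:ℝ)^(m * (n:ℤ)))
            * ((2:ℝ)^m * ((K:ℝ) * dist x y)) := by ring
        _ = 2 * (2:ℝ)^n * ((2:ℝ)^m * ((K:ℝ) * dist x y)) := by rw [hcan, mul_one]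
        _ = 2^(n+1) * (K:ℝ) * ((2:ℝ)^m * dist x y) := by rw [pow_succ]; ring
    have hrhs : C * (2:ℝ)^l / Metric.diam (cubeSet n j k) * dist x y
        = C * ((2:ℝ)^m * dist x y) := by
      rw [hdiam]
      have : (2:ℝ)^l / (2:ℝ)^(-j) = (2:ℝ)^m := by
        rw [div_eq_mul_inv, ← zpow_neg, neg_neg, ← zpow_add₀ (by norm_num : (2:ℝ) ≠ 0), hm,
          add_comm]
      rw [mul_div_assoc, this, mul_assoc]
    rw [hrhs]
    calc |mollHaar n b j k ε l x - mollHaar n b j k ε l y|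
        ≤ 2 * (2 * (2:ℝ)^(-m))^n * L4 := key
      _ = 2^(n+1) * (K:ℝ) * ((2:ℝ)^m * dist x y) := halg
      _ ≤ C * ((2:ℝ)^m * dist x y) := by
          apply mul_le_mul_of_nonneg_right _ (by positivity)
          rw [hC]
          have h1 : (0:ℝ) ≤ 2^(n+1) := by positivity
          nlinarith
end
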